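/- arXiv:1806.03428 — 4 statements merged into one kernel-verified Lean document; each statement's English description precedes it below -/
import Mathlib

section
/- Let θ ∈ [0,1], let 1 ≤ p, q, r < ∞ and α, β, γ > 0 satisfy 1/p = θ/q + (1−θ)/r and α = θβ + (1−θ)γ. Then B^{q,β}(X) ∩ B^{r,γ}(X) ⊆ B^{p,α}(X), and every f ∈ B^{q,β}(X) ∩ B^{r,γ}(X) satisfies ‖f‖_{p,α} ≤ ‖f‖_{q,β}^{θ} · ‖f‖_{r,γ}^{1−θ}. -/
open MeasureTheory ENNReal Metric Filter

noncomputable section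

namespace BesovDirichlet

variable {X : Type*} [MeasurableSpace X]

/-- A heat kernel on a measure space: jointly measurable, nonnegative, symmetric,
satisfying the semigroup property and conservative. -/
structure IsHeatKernel (μ : Measure X) (K : ℝ → X → X → ℝ) : Prop where
  measurable : ∀ t : ℝ, Measurable fun xy : X × X => K t xy.1 xy.2
  nonneg : ∀ (t : ℝ) (x y : X), 0 ≤ K t x y
  symm : ∀ (t : ℝ) (x y : X), K t x y = K t y x
  semigroup : ∀ s t : ℝ, 0 < s → 0 < t →
    ∀ᵐ xy ∂(μ.prod μ), (∫ z, K t xy.1 z * K s z xy.2 ∂μ) = K (t + s) xy.1 xy.2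
  conservative : ∀ t : ℝ, 0 < t → ∀ᵐ x ∂μ, (∫ y, K t x y ∂μ) = 1

/-- The heat semigroup `P_t f (x) = ∫ p_t(x,y) f(y) dμ(y)`. -/
def heatOp (μ : Measure X) (K : ℝ → X → X → ℝ) (t : ℝ) (f : X → ℝ) (x : X) : ℝ :=
  ∫ y, K t x y * f y ∂μ

/-- The double integral `∫∫ |f(x) − f(y)|^p p_t(x,y) dμ(x) dμ(y)` as an extended real. -/
def besovEnergy (μ : Measure X) (K : ℝ → X → X → ℝ) (p t : ℝ) (f : X → ℝ) : ℝ≥0∞ :=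
  ∫⁻ x, (∫⁻ y, ENNReal.ofReal (|f x - f y| ^ p) * ENNReal.ofReal (K t x y) ∂μ) ∂μ

/-- The heat-semigroup Besov seminorm `‖f‖_{p,α}`. -/
def besovSeminorm (μ : Measure X) (K : ℝ → X → X → ℝ) (p α : ℝ) (f : X → ℝ) : ℝ≥0∞ :=
  ⨆ (t : ℝ) (_ : 0 < t), ENNReal.ofReal (t ^ (-α)) * besovEnergy μ K p t f ^ (1 / p)

/-- Membership in the Besov space `B^{p,α}(X)`. -/
def MemBesov (μ : Measure X) (K : ℝ → X → X → ℝ) (p α : ℝ) (f : X → ℝ) : Prop :=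
  MemLp f (ENNReal.ofReal p) μ ∧ besovSeminorm μ K p α f ≠ ∞

/-!
For fixed `t > 0`, `besovEnergy μ K p t f ^ (1 / p)` is the `L^p` norm of `(x, y) ↦ f x - f y`
for the measure `p_t(x, y) dμ(x) dμ(y)`, and `L^p` norms are log-convex in `1 / p`
(Hölder's inequality). Since also `t^{-α} = (t^{-β})^θ (t^{-γ})^{1-θ}`, the bound holds for each
`t` before taking suprema. Log-convexity for `μ` itself gives `f ∈ L^p`.
-/

theorem eLpNorm_ofReal_le_rpow_mul_rpow {Y E : Type*} [MeasurableSpace Y] [NormedAddCommGroup E]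
    {ν : Measure Y} {f : Y → E} (hf : AEStronglyMeasurable f ν)
    {θ p q r : ℝ} (hθ0 : 0 ≤ θ) (hθ1 : θ ≤ 1) (hp : 0 < p) (hq : 0 < q) (hr : 0 < r)
    (hexp : 1 / p = θ / q + (1 - θ) / r) :
    eLpNorm f (.ofReal p) ν ≤
      eLpNorm f (.ofReal q) ν ^ θ * eLpNorm f (.ofReal r) ν ^ (1 - θ) := by
  have eLpNorm_eq {s : ℝ} (hs : 0 < s) :
      eLpNorm f (.ofReal s) ν = (∫⁻ y, ‖f y‖ₑ ^ s ∂ν) ^ (1 / s) := by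
    rw [eLpNorm_eq_lintegral_rpow_enorm_toReal (by simpa using hs) ofReal_ne_top,
      toReal_ofReal hs.le]
  rw [eLpNorm_eq hp, eLpNorm_eq hq, eLpNorm_eq hr]
  -- Hölder's inequality for `‖f‖^q` and `‖f‖^r` with weights `a + b = 1`, where `a q + b r = p`.
  set a := θ * p / q
  set b := (1 - θ) * p / r
  have hθ1' : 0 ≤ 1 - θ := sub_nonneg.2 hθ1
  have ha0 : 0 ≤ a := by positivity
  have hb0 : 0 ≤ b := by positivity
  have hab : a + b = 1 := by
    have : a + b = p * (1 / p) := by rw [hexp]; ring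
    rwa [mul_one_div_cancel hp.ne'] at this
  have hsplit (y : Y) : (‖f y‖ₑ ^ q) ^ a * (‖f y‖ₑ ^ r) ^ b = ‖f y‖ₑ ^ p := by
    rw [← rpow_mul, ← rpow_mul, ← rpow_add_of_nonneg _ _ (by positivity) (by positivity)]
    congr 1
    simp only [a, b]
    field_simp
    ring
  have hholder := lintegral_mul_norm_pow_le (hf.enorm.pow_const q) (hf.enorm.pow_const r)
    ha0 hb0 hab
  simp_rw [hsplit] at hholder
  calc (∫⁻ y, ‖f y‖ₑ ^ p ∂ν) ^ (1 / p)
      ≤ ((∫⁻ y, ‖f y‖ₑ ^ q ∂ν) ^ a * (∫⁻ y, ‖f y‖ₑ ^ r ∂ν) ^ b) ^ (1 / p) :=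
        rpow_le_rpow hholder (by positivity)
    _ = _ := by
        rw [mul_rpow_of_nonneg _ _ (by positivity), ← rpow_mul, ← rpow_mul, ← rpow_mul,
          ← rpow_mul]
        simp only [a, b]
        congr 2 <;> field_simp

theorem memLp_ofReal_of_interpolation {Y E : Type*} [MeasurableSpace Y] [NormedAddCommGroup E]
    {ν : Measure Y} {f : Y → E} {θ p q r : ℝ}
    (hfq : MemLp f (.ofReal q) ν) (hfr : MemLp f (.ofReal r) ν)
    (hθ0 : 0 ≤ θ) (hθ1 : θ ≤ 1) (hp : 0 < p) (hq : 0 < q) (hr : 0 < r)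
    (hexp : 1 / p = θ / q + (1 - θ) / r) :
    MemLp f (.ofReal p) ν :=
  ⟨hfq.1, (eLpNorm_ofReal_le_rpow_mul_rpow hfq.1 hθ0 hθ1 hp hq hr hexp).trans_lt <|
    mul_lt_top (rpow_lt_top_of_nonneg hθ0 hfq.2.ne) (rpow_lt_top_of_nonneg (by linarith) hfr.2.ne)⟩

section Besov

variable {μ : Measure X} {K : ℝ → X → X → ℝ} {f : X → ℝ} {θ p q r α β γ t : ℝ}

def heatKernelMeasure (μ : Measure X) (K : ℝ → X → X → ℝ) (t : ℝ) : Measure (X × X) :=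
  (μ.prod μ).withDensity fun z => ENNReal.ofReal (K t z.1 z.2)

theorem aemeasurable_sub_fst_snd [SFinite μ] (hf : AEMeasurable f μ) :
    AEMeasurable (fun z : X × X => f z.1 - f z.2) (μ.prod μ) :=
  (hf.comp_quasiMeasurePreserving Measure.quasiMeasurePreserving_fst).sub
    (hf.comp_quasiMeasurePreserving Measure.quasiMeasurePreserving_snd)

theorem besovEnergy_rpow_eq_eLpNorm [SFinite μ]
    (hK : Measurable fun z : X × X => K t z.1 z.2) (hf : AEMeasurable f μ) (hp : 0 < p) :
    besovEnergy μ K p t f ^ (1 / p) =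
      eLpNorm (fun z : X × X => f z.1 - f z.2) (.ofReal p) (heatKernelMeasure μ K t) := by
  have hdensity : AEMeasurable (fun z : X × X => ENNReal.ofReal (K t z.1 z.2)) (μ.prod μ) :=
    (measurable_ofReal.comp hK).aemeasurable
  have hintegrand := (aemeasurable_sub_fst_snd hf).enorm.pow_const p
  rw [eLpNorm_eq_lintegral_rpow_enorm_toReal (by simpa using hp) ofReal_ne_top,
    toReal_ofReal hp.le, heatKernelMeasure, lintegral_withDensity_eq_lintegral_mul₀ hdensity
    hintegrand, besovEnergy, lintegral_lintegral]
  · congr 2 with z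
    rw [Pi.mul_apply, mul_comm, Real.enorm_eq_ofReal_abs,
      ofReal_rpow_of_nonneg (abs_nonneg _) hp.le]
  · exact (measurable_ofReal.comp_aemeasurable
      ((aemeasurable_sub_fst_snd hf).norm.pow_const p)).mul hdensity

theorem besovSeminorm_eq_iSup_eLpNorm [SFinite μ]
    (hK : ∀ t, Measurable fun z : X × X => K t z.1 z.2) (hf : AEMeasurable f μ) (hp : 0 < p) :
    besovSeminorm μ K p α f = ⨆ (t : ℝ) (_ : 0 < t), ENNReal.ofReal (t ^ (-α)) *
      eLpNorm (fun z : X × X => f z.1 - f z.2) (.ofReal p) (heatKernelMeasure μ K t) := by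
  simp only [besovSeminorm, besovEnergy_rpow_eq_eLpNorm (hK _) hf hp]

theorem ofReal_rpow_neg_eq_rpow_mul_rpow (ht : 0 < t) (hα : α = θ * β + (1 - θ) * γ) :
    ENNReal.ofReal (t ^ (-α)) =
      ENNReal.ofReal (t ^ (-β)) ^ θ * ENNReal.ofReal (t ^ (-γ)) ^ (1 - θ) := by
  rw [ofReal_rpow_of_pos (by positivity), ofReal_rpow_of_pos (by positivity),
    ← ofReal_mul (by positivity), ← Real.rpow_mul ht.le, ← Real.rpow_mul ht.le,
    ← Real.rpow_add ht, hα]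
  ring_nf

theorem besovSeminorm_le_rpow_mul_rpow [SFinite μ]
    (hK : ∀ t, Measurable fun z : X × X => K t z.1 z.2) (hf : AEMeasurable f μ)
    (hθ0 : 0 ≤ θ) (hθ1 : θ ≤ 1) (hp : 0 < p) (hq : 0 < q) (hr : 0 < r)
    (hexp : 1 / p = θ / q + (1 - θ) / r) (hα : α = θ * β + (1 - θ) * γ) :
    besovSeminorm μ K p α f ≤ besovSeminorm μ K q β f ^ θ * besovSeminorm μ K r γ f ^ (1 - θ) := by
  have hθ1' : 0 ≤ 1 - θ := sub_nonneg.2 hθ1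
  rw [besovSeminorm_eq_iSup_eLpNorm hK hf hp, besovSeminorm_eq_iSup_eLpNorm hK hf hq,
    besovSeminorm_eq_iSup_eLpNorm hK hf hr]
  refine iSup₂_le fun t ht => ?_
  set D := fun z : X × X => f z.1 - f z.2
  have hD : AEStronglyMeasurable D (heatKernelMeasure μ K t) :=
    ((aemeasurable_sub_fst_snd hf).mono_ac
      (withDensity_absolutelyContinuous _ _)).aestronglyMeasurable
  set ν := heatKernelMeasure μ K t
  calc ENNReal.ofReal (t ^ (-α)) * eLpNorm D (.ofReal p) ν
      ≤ ENNReal.ofReal (t ^ (-β)) ^ θ * ENNReal.ofReal (t ^ (-γ)) ^ (1 - θ) *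
          (eLpNorm D (.ofReal q) ν ^ θ * eLpNorm D (.ofReal r) ν ^ (1 - θ)) := by
        rw [ofReal_rpow_neg_eq_rpow_mul_rpow ht hα]
        gcongr
        exact eLpNorm_ofReal_le_rpow_mul_rpow hD hθ0 hθ1 hp hq hr hexp
    _ = (ENNReal.ofReal (t ^ (-β)) * eLpNorm D (.ofReal q) ν) ^ θ *
          (ENNReal.ofReal (t ^ (-γ)) * eLpNorm D (.ofReal r) ν) ^ (1 - θ) := by
        rw [mul_rpow_of_nonneg _ _ hθ0, mul_rpow_of_nonneg _ _ hθ1']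
        ring
    _ ≤ _ := by
        gcongr <;> exact le_iSup₂_of_le t ht le_rfl

end Besov

theorem besov_interpolation_general
    {X : Type*} [MeasurableSpace X]
    (μ : Measure X) [SigmaFinite μ] (K : ℝ → X → X → ℝ) (hK : IsHeatKernel μ K)
    (θ p q r α β γ : ℝ) (hθ0 : 0 ≤ θ) (hθ1 : θ ≤ 1)
    (hp : 1 ≤ p) (hq : 1 ≤ q) (hr : 1 ≤ r)
    (hexp : 1 / p = θ / q + (1 - θ) / r) (hord : α = θ * β + (1 - θ) * γ)
    (f : X → ℝ) (hfq : MemBesov μ K q β f) (hfr : MemBesov μ K r γ f) :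
    MemBesov μ K p α f ∧
      besovSeminorm μ K p α f ≤
        besovSeminorm μ K q β f ^ θ * besovSeminorm μ K r γ f ^ (1 - θ) := by
  have hp0 : 0 < p := by linarith
  have hq0 : 0 < q := by linarith
  have hr0 : 0 < r := by linarith
  have hsemi := besovSeminorm_le_rpow_mul_rpow hK.measurable hfq.1.aemeasurable
    hθ0 hθ1 hp0 hq0 hr0 hexp hord
  refine ⟨⟨memLp_ofReal_of_interpolation hfq.1 hfr.1 hθ0 hθ1 hp0 hq0 hr0 hexp, ?_⟩, hsemi⟩
  exact ne_top_of_le_ne_top (mul_ne_top (rpow_ne_top_of_nonneg hθ0 hfq.2)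
    (rpow_ne_top_of_nonneg (by linarith) hfr.2)) hsemi

/-- **Interpolation inequality for Besov spaces.** -/
theorem besov_interpolation
    {X : Type*} [MetricSpace X] [MeasurableSpace X] [BorelSpace X]
    (μ : Measure X) [SigmaFinite μ] (K : ℝ → X → X → ℝ) (hK : IsHeatKernel μ K)
    (θ p q r α β γ : ℝ) (hθ0 : 0 ≤ θ) (hθ1 : θ ≤ 1)
    (hp : 1 ≤ p) (hq : 1 ≤ q) (hr : 1 ≤ r)
    (hα : 0 < α) (hβ : 0 < β) (hγ : 0 < γ)
    (hexp : 1 / p = θ / q + (1 - θ) / r) (hord : α = θ * β + (1 - θ) * γ)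
    (f : X → ℝ) (hfq : MemBesov μ K q β f) (hfr : MemBesov μ K r γ f) :
    MemBesov μ K p α f ∧
      besovSeminorm μ K p α f ≤
        besovSeminorm μ K q β f ^ θ * besovSeminorm μ K r γ f ^ (1 - θ) :=
  besov_interpolation_general μ K hK θ p q r α β γ hθ0 hθ1 hp hq hr hexp hord f hfq hfr

end BesovDirichlet
end
end

section
/- Assume the ultracontractive bound. Let 1 ≤ p, q < ∞ and α > 0. There exists a constant C > 0, depending only on p, q, α, β and C₀, such that for every f ∈ B^{p,α}(X) ∩ L^q(X,μ): sup_{s>0} s^{1 + qα/β} · μ({x ∈ X : |f(x)| > s})^{1/p} ≤ C · ‖f‖_{p,α} · ‖f‖_{L^q(X,μ)}^{qα/β}. -/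
open MeasureTheory ENNReal Metric Filter

noncomputable section

namespace BesovDirichlet

variable {X : Type*} [MeasurableSpace X]

/-- Ultracontractive bound `p_t(x,y) ≤ C₀ t^{−β}`. -/
def Ultracontractive (μ : Measure X) (K : ℝ → X → X → ℝ) (C₀ β : ℝ) : Prop :=
  ∀ t : ℝ, 0 < t → ∀ᵐ xy ∂(μ.prod μ), K t xy.1 xy.2 ≤ C₀ * t ^ (-β)

/-!
Fix `s, t > 0`. For `x` with `|f x| > s`, the unit mass of `p_t(x, ·)` either lies on
`{|f| > s/2}`, where ultracontractivity bounds it by `C₀ t^{-β} μ{|f| > s/2}`, or off it, where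
`|f x - f y| ≥ s/2` bounds it by `(2/s)^p ∫ |f x - f y|^p p_t(x, y) dμ(y)`. Integrating over
`{|f| > s}` gives `μ{|f| > s} ≤ C₀ t^{-β} μ{|f| > s/2} μ{|f| > s} + (2/s)^p E_t(f)`, and
`E_t(f)^{1/p} ≤ t^α ‖f‖_{p,α}`. Chebyshev gives `μ{|f| > s/2} ≤ (2‖f‖_q / s)^q`, so choosing
`t^β = 2 C₀ (2‖f‖_q / s)^q` makes the first term at most `μ{|f| > s} / 2`; absorbing it leaves
`μ{|f| > s}^{1/p} ≲ s^{-1} t^α ‖f‖_{p,α}`, which is the estimate.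
-/

lemma ofReal_le_rpow_mul_rpow_mul {p s d k : ℝ} (hp : 0 ≤ p) (hs : 0 < s) (hd : s / 2 ≤ |d|)
    (hk : 0 ≤ k) :
    ENNReal.ofReal k ≤
      ENNReal.ofReal ((2 / s) ^ p) * (ENNReal.ofReal (|d| ^ p) * ENNReal.ofReal k) := by
  have hone : 1 ≤ (2 / s * |d|) ^ p := by
    refine Real.one_le_rpow ?_ hp
    rw [div_mul_eq_mul_div, le_div_iff₀ hs]
    linarith
  rw [← ENNReal.ofReal_mul (by positivity), ← ENNReal.ofReal_mul (by positivity), ← mul_assoc,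
    ← Real.mul_rpow (by positivity) (abs_nonneg d)]
  exact ENNReal.ofReal_le_ofReal (le_mul_of_one_le_left hk hone)

lemma mul_rpow_neg_mul_eq_half {C₀ β M : ℝ} (hC₀ : 0 < C₀) (hβ : β ≠ 0) (hM : 0 < M) :
    C₀ * ((2 * C₀ * M) ^ (1 / β)) ^ (-β) * M = 1 / 2 := by
  rw [← Real.rpow_mul (by positivity), one_div_mul_eq_div, neg_div, div_self hβ,
    Real.rpow_neg_one]
  field_simp

def weakTypeConstant (p q α β C₀ : ℝ) : ℝ :=
  2 ^ (1 / p) * 2 * (2 * C₀) ^ (α / β) * 2 ^ (q * α / β)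

lemma weakTypeConstant_pos {p q α β C₀ : ℝ} (hC₀ : 0 < C₀) :
    0 < weakTypeConstant p q α β C₀ := by
  unfold weakTypeConstant
  positivity

lemma weakTypeConstant_mul_rpow_eq {p q α β C₀ s ℓ : ℝ} (hC₀ : 0 ≤ C₀) (hs : 0 < s)
    (hℓ : 0 ≤ ℓ) :
    weakTypeConstant p q α β C₀ * ℓ ^ (q * α / β) =
      s ^ (1 + q * α / β) *
        (2 ^ (1 / p) * (2 / s) * ((2 * C₀ * (2 * ℓ / s) ^ q) ^ (1 / β)) ^ α) := by
  have htime : ((2 * C₀ * (2 * ℓ / s) ^ q) ^ (1 / β)) ^ α =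
      (2 * C₀) ^ (α / β) * (2 * ℓ / s) ^ (q * α / β) := by
    rw [← Real.rpow_mul (by positivity), Real.mul_rpow (by positivity) (by positivity),
      ← Real.rpow_mul (by positivity), one_div_mul_eq_div, mul_div_assoc q]
  have hs_pow : s ^ (1 + q * α / β) = s * s ^ (q * α / β) := by
    rw [Real.rpow_add hs, Real.rpow_one]
  have hratio : (2 * ℓ / s) ^ (q * α / β) =
      2 ^ (q * α / β) * ℓ ^ (q * α / β) / s ^ (q * α / β) := by
    rw [Real.div_rpow (by positivity) hs.le, Real.mul_rpow zero_le_two hℓ]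
  have hs_pos : 0 < s ^ (q * α / β) := Real.rpow_pos_of_pos hs _
  rw [htime, hs_pow, hratio, weakTypeConstant]
  field_simp

section

variable {μ : Measure X} {K : ℝ → X → X → ℝ}

lemma besovEnergy_congr_ae {p t : ℝ} {f g : X → ℝ} (hfg : f =ᵐ[μ] g) :
    besovEnergy μ K p t f = besovEnergy μ K p t g := by
  refine lintegral_congr_ae ?_
  filter_upwards [hfg] with x hx
  refine lintegral_congr_ae ?_
  filter_upwards [hfg] with y hy
  rw [hx, hy]

lemma besovSeminorm_congr_ae {p α : ℝ} {f g : X → ℝ} (hfg : f =ᵐ[μ] g) :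
    besovSeminorm μ K p α f = besovSeminorm μ K p α g := by
  simp only [besovSeminorm, besovEnergy_congr_ae hfg]

lemma besovEnergy_rpow_le {p α t : ℝ} (ht : 0 < t) (f : X → ℝ) :
    besovEnergy μ K p t f ^ (1 / p) ≤ ENNReal.ofReal (t ^ α) * besovSeminorm μ K p α f := by
  have hcancel : ENNReal.ofReal (t ^ α) * ENNReal.ofReal (t ^ (-α)) = 1 := by
    rw [← ENNReal.ofReal_mul (by positivity), ← Real.rpow_add ht, add_neg_cancel,
      Real.rpow_zero, ENNReal.ofReal_one]
  calc besovEnergy μ K p t f ^ (1 / p)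
      = ENNReal.ofReal (t ^ α) *
          (ENNReal.ofReal (t ^ (-α)) * besovEnergy μ K p t f ^ (1 / p)) := by
        rw [← mul_assoc, hcancel, one_mul]
    _ ≤ ENNReal.ofReal (t ^ α) * besovSeminorm μ K p α f := by
        gcongr
        exact le_iSup₂ (f := fun (u : ℝ) (_ : 0 < u) =>
          ENNReal.ofReal (u ^ (-α)) * besovEnergy μ K p u f ^ (1 / p)) t ht

lemma measure_lt_abs_le_eLpNorm_div_rpow {f : X → ℝ} {q r : ℝ} (hq : 0 < q)
    (hf : AEStronglyMeasurable f μ) (hr : 0 < r) :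
    μ {x | r < |f x|} ≤ (eLpNorm f (ENNReal.ofReal q) μ / ENNReal.ofReal r) ^ q := by
  have hcheb := meas_ge_le_mul_pow_eLpNorm_enorm μ (by simpa using hq) ofReal_ne_top hf
    (ε := ENNReal.ofReal r) (by simpa using hr) (by simp)
  rw [toReal_ofReal hq.le] at hcheb
  calc μ {x | r < |f x|} ≤ μ {x | ENNReal.ofReal r ≤ ‖f x‖ₑ} := by
        refine measure_mono fun x hx => ?_
        rw [Set.mem_ofPred_eq, ← ofReal_norm, Real.norm_eq_abs]
        exact ENNReal.ofReal_le_ofReal (le_of_lt hx)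
    _ ≤ (ENNReal.ofReal r)⁻¹ ^ q * eLpNorm f (ENNReal.ofReal q) μ ^ q := hcheb
    _ = (eLpNorm f (ENNReal.ofReal q) μ / ENNReal.ofReal r) ^ q := by
        rw [ENNReal.div_rpow_of_nonneg _ _ hq.le, ENNReal.inv_rpow, div_eq_mul_inv, mul_comm]

lemma IsHeatKernel.ae_lintegral_ofReal_eq_one (hK : IsHeatKernel μ K) {t : ℝ} (ht : 0 < t) :
    ∀ᵐ x ∂μ, ∫⁻ y, ENNReal.ofReal (K t x y) ∂μ = 1 := by
  filter_upwards [hK.conservative t ht] with x hx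
  -- a non-integrable kernel would have Bochner integral `0`, not `1`
  have hint : Integrable (K t x) μ := by
    by_contra h
    rw [integral_undef h] at hx
    exact zero_ne_one hx
  rw [← ofReal_integral_eq_lintegral_ofReal hint (ae_of_all _ (hK.nonneg t x)), hx,
    ENNReal.ofReal_one]

variable [SFinite μ] {C₀ β p t s : ℝ} {f : X → ℝ}

lemma IsHeatKernel.ae_one_le_of_lt_abs (hK : IsHeatKernel μ K) (hU : Ultracontractive μ K C₀ β)
    (hf : Measurable f) (hp : 0 ≤ p) (ht : 0 < t) (hs : 0 < s) :
    ∀ᵐ x ∂μ, s < |f x| →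
      1 ≤ ENNReal.ofReal (C₀ * t ^ (-β)) * μ {y | s / 2 < |f y|} +
        ENNReal.ofReal ((2 / s) ^ p) *
          ∫⁻ y, ENNReal.ofReal (|f x - f y| ^ p) * ENNReal.ofReal (K t x y) ∂μ := by
  set B := {y | s / 2 < |f y|}
  have hB : MeasurableSet B := measurableSet_lt measurable_const hf.abs
  filter_upwards [hK.ae_lintegral_ofReal_eq_one ht, Measure.ae_ae_of_ae_prod (hU t ht)]
    with x hmass hbound hx
  calc 1 = (∫⁻ y in B, ENNReal.ofReal (K t x y) ∂μ) +
        ∫⁻ y in Bᶜ, ENNReal.ofReal (K t x y) ∂μ := by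
        rw [lintegral_add_compl _ hB, hmass]
    _ ≤ (∫⁻ _ in B, ENNReal.ofReal (C₀ * t ^ (-β)) ∂μ) +
        ∫⁻ y in Bᶜ, ENNReal.ofReal ((2 / s) ^ p) *
          (ENNReal.ofReal (|f x - f y| ^ p) * ENNReal.ofReal (K t x y)) ∂μ := by
        gcongr ?_ + ?_
        · exact lintegral_mono_ae ((ae_restrict_of_ae hbound).mono
            fun y hy => ENNReal.ofReal_le_ofReal hy)
        · refine setLIntegral_mono' hB.compl fun y hy => ?_
          have hy : |f y| ≤ s / 2 := not_lt.mp hy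
          have hxy : s / 2 ≤ |f x - f y| := by
            linarith [abs_sub_abs_le_abs_sub (f x) (f y)]
          exact ofReal_le_rpow_mul_rpow_mul hp hs hxy (hK.nonneg t x y)
    _ ≤ _ := by
        rw [setLIntegral_const, lintegral_const_mul' _ _ ofReal_ne_top]
        gcongr
        exact Measure.restrict_le_self

lemma IsHeatKernel.measure_lt_abs_le (hK : IsHeatKernel μ K) (hU : Ultracontractive μ K C₀ β)
    (hf : Measurable f) (hp : 0 ≤ p) (ht : 0 < t) (hs : 0 < s) :
    μ {x | s < |f x|} ≤
      ENNReal.ofReal (C₀ * t ^ (-β)) * μ {x | s / 2 < |f x|} * μ {x | s < |f x|} +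
        ENNReal.ofReal ((2 / s) ^ p) * besovEnergy μ K p t f := by
  set A := {x | s < |f x|}
  set D := ENNReal.ofReal (C₀ * t ^ (-β)) * μ {x | s / 2 < |f x|}
  set c := ENNReal.ofReal ((2 / s) ^ p)
  have hA : MeasurableSet A := measurableSet_lt measurable_const hf.abs
  calc μ A = ∫⁻ _ in A, 1 ∂μ := by rw [setLIntegral_const, one_mul]
    _ ≤ ∫⁻ x in A, (D + c *
          ∫⁻ y, ENNReal.ofReal (|f x - f y| ^ p) * ENNReal.ofReal (K t x y) ∂μ) ∂μ :=
        lintegral_mono_ae ((ae_restrict_iff' hA).mpr (hK.ae_one_le_of_lt_abs hU hf hp ht hs))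
    _ ≤ D * μ A + c * besovEnergy μ K p t f := by
        rw [lintegral_add_left measurable_const, setLIntegral_const,
          lintegral_const_mul' _ _ ofReal_ne_top]
        gcongr
        exact setLIntegral_le_lintegral _ _

lemma IsHeatKernel.measure_lt_abs_rpow_le (hK : IsHeatKernel μ K)
    (hU : Ultracontractive μ K C₀ β) (hf : Measurable f) (hp : 0 < p) (ht : 0 < t) (hs : 0 < s)
    (α : ℝ) (hsmall : ENNReal.ofReal (C₀ * t ^ (-β)) * μ {x | s / 2 < |f x|} ≤ 2⁻¹)
    (hfin : μ {x | s < |f x|} ≠ ∞) :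
    μ {x | s < |f x|} ^ (1 / p) ≤
      ENNReal.ofReal (2 ^ (1 / p) * (2 / s) * t ^ α) * besovSeminorm μ K p α f := by
  set A := {x | s < |f x|}
  set E := besovEnergy μ K p t f
  have hkey : μ A ≤ μ A / 2 + ENNReal.ofReal ((2 / s) ^ p) * E := by
    refine (hK.measure_lt_abs_le hU hf hp.le ht hs).trans ?_
    rw [ENNReal.div_eq_inv_mul]
    gcongr
  have hA : μ A ≤ ENNReal.ofReal (2 * (2 / s) ^ p) * E := by
    have hhalf : μ A / 2 ≤ ENNReal.ofReal ((2 / s) ^ p) * E := by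
      rw [← ENNReal.sub_half hfin]
      exact tsub_le_iff_left.mpr hkey
    rw [ENNReal.div_le_iff_le_mul (by simp) (by simp)] at hhalf
    rw [ENNReal.ofReal_mul zero_le_two, ENNReal.ofReal_ofNat]
    calc μ A ≤ ENNReal.ofReal ((2 / s) ^ p) * E * 2 := hhalf
      _ = 2 * ENNReal.ofReal ((2 / s) ^ p) * E := by ring
  have hp' : 0 ≤ 1 / p := by positivity
  calc μ A ^ (1 / p) ≤ (ENNReal.ofReal (2 * (2 / s) ^ p) * E) ^ (1 / p) := by gcongr
    _ = ENNReal.ofReal (2 ^ (1 / p) * (2 / s)) * E ^ (1 / p) := by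
        rw [ENNReal.mul_rpow_of_nonneg _ _ hp', ENNReal.ofReal_rpow_of_nonneg (by positivity) hp',
          Real.mul_rpow zero_le_two (by positivity), ← Real.rpow_mul (by positivity),
          mul_one_div_cancel hp.ne', Real.rpow_one]
    _ ≤ ENNReal.ofReal (2 ^ (1 / p) * (2 / s)) *
          (ENNReal.ofReal (t ^ α) * besovSeminorm μ K p α f) := by
        gcongr
        exact besovEnergy_rpow_le ht f
    _ = _ := by rw [← mul_assoc, ← ENNReal.ofReal_mul (by positivity)]

theorem IsHeatKernel.weak_type_estimate_of_measurable {q α : ℝ} (hK : IsHeatKernel μ K)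
    (hU : Ultracontractive μ K C₀ β) (hp : 0 < p) (hq : 0 < q) (hβ : 0 < β) (hC₀ : 0 < C₀)
    (hf : Measurable f) (hfq : MemLp f (ENNReal.ofReal q) μ) (hs : 0 < s) :
    ENNReal.ofReal (s ^ (1 + q * α / β)) * μ {x | s < |f x|} ^ (1 / p) ≤
      ENNReal.ofReal (weakTypeConstant p q α β C₀) * besovSeminorm μ K p α f *
        eLpNorm f (ENNReal.ofReal q) μ ^ (q * α / β) := by
  obtain ⟨ℓ, hℓ, hL⟩ :
      ∃ ℓ : ℝ, 0 ≤ ℓ ∧ eLpNorm f (ENNReal.ofReal q) μ = ENNReal.ofReal ℓ :=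
    ⟨_, toReal_nonneg, (ofReal_toReal hfq.2.ne).symm⟩
  have hcheb (r : ℝ) (hr : 0 < r) : μ {x | r < |f x|} ≤ ENNReal.ofReal ((ℓ / r) ^ q) := by
    rw [← ENNReal.ofReal_rpow_of_nonneg (by positivity) hq.le, ENNReal.ofReal_div_of_pos hr,
      ← hL]
    exact measure_lt_abs_le_eLpNorm_div_rpow hq hfq.1 hr
  rcases hℓ.eq_or_lt with rfl | hℓ
  · have hA : μ {x | s < |f x|} = 0 := by
      simpa [Real.zero_rpow hq.ne'] using hcheb s hs
    simp [hA, ENNReal.zero_rpow_of_pos (inv_pos.mpr hp)]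
  set M := (2 * ℓ / s) ^ q
  set t := (2 * C₀ * M) ^ (1 / β)
  have hB : μ {x | s / 2 < |f x|} ≤ ENNReal.ofReal M := by
    have hcheb_half := hcheb (s / 2) (by positivity)
    rwa [div_div_eq_mul_div, mul_comm] at hcheb_half
  have hsmall : ENNReal.ofReal (C₀ * t ^ (-β)) * μ {x | s / 2 < |f x|} ≤ 2⁻¹ := by
    calc _ ≤ ENNReal.ofReal (C₀ * t ^ (-β)) * ENNReal.ofReal M := by gcongr
      _ = 2⁻¹ := by
        rw [← ENNReal.ofReal_mul (by positivity),
          mul_rpow_neg_mul_eq_half hC₀ hβ.ne' (by positivity), one_div,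
          ENNReal.ofReal_inv_of_pos two_pos, ENNReal.ofReal_ofNat]
  have hfin : μ {x | s < |f x|} ≠ ∞ :=
    ((measure_mono fun x (hx : s < |f x|) => (by linarith : s / 2 < |f x|)).trans hB
      |>.trans_lt ofReal_lt_top).ne
  calc ENNReal.ofReal (s ^ (1 + q * α / β)) * μ {x | s < |f x|} ^ (1 / p)
      ≤ ENNReal.ofReal (s ^ (1 + q * α / β)) *
          (ENNReal.ofReal (2 ^ (1 / p) * (2 / s) * t ^ α) * besovSeminorm μ K p α f) := by
        gcongr
        exact hK.measure_lt_abs_rpow_le hU hf hp (by positivity) hs α hsmall hfin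
    _ = ENNReal.ofReal (weakTypeConstant p q α β C₀) * besovSeminorm μ K p α f *
          eLpNorm f (ENNReal.ofReal q) μ ^ (q * α / β) := by
        rw [← mul_assoc, ← ENNReal.ofReal_mul (by positivity),
          ← weakTypeConstant_mul_rpow_eq hC₀.le hs hℓ.le, hL,
          ENNReal.ofReal_rpow_of_pos hℓ, ENNReal.ofReal_mul (weakTypeConstant_pos hC₀).le]
        ring

end

theorem weak_type_estimate_general (p q α β C₀ : ℝ)
    (hp : 1 ≤ p) (hq : 1 ≤ q) (hβ : 0 < β) (hC₀ : 0 < C₀) :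
    ∃ C : ℝ, 0 < C ∧
      ∀ (X : Type) [MetricSpace X] [MeasurableSpace X] [BorelSpace X]
        (μ : Measure X) [SigmaFinite μ] (K : ℝ → X → X → ℝ),
        IsHeatKernel μ K → Ultracontractive μ K C₀ β →
        ∀ f : X → ℝ, MemBesov μ K p α f → MemLp f (ENNReal.ofReal q) μ →
        ∀ s : ℝ, 0 < s →
          ENNReal.ofReal (s ^ (1 + q * α / β)) * μ {x | s < |f x|} ^ (1 / p) ≤
            ENNReal.ofReal C * besovSeminorm μ K p α f *
              eLpNorm f (ENNReal.ofReal q) μ ^ (q * α / β) := by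
  refine ⟨weakTypeConstant p q α β C₀, weakTypeConstant_pos hC₀, ?_⟩
  intro X _ _ _ μ _ K hK hU f _ hfq s hs
  obtain ⟨g, hg, hfg⟩ : ∃ g : X → ℝ, Measurable g ∧ f =ᵐ[μ] g :=
    ⟨hfq.1.mk f, hfq.1.stronglyMeasurable_mk.measurable, hfq.1.ae_eq_mk⟩
  have hlevel : {x | s < |f x|} =ᵐ[μ] {x | s < |g x|} := hfg.fun_comp fun y => s < |y|
  rw [measure_congr hlevel, besovSeminorm_congr_ae hfg, eLpNorm_congr_ae hfg]
  exact hK.weak_type_estimate_of_measurable hU (by linarith) (by linarith) hβ hC₀ hg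
    (hfq.ae_eq hfg) hs

/-- **Weak type estimate.** Under the ultracontractive bound, for `f ∈ B^{p,α}(X) ∩ L^q(X,μ)`,
`sup_{s>0} s^{1+qα/β} μ({|f| > s})^{1/p} ≤ C ‖f‖_{p,α} ‖f‖_q^{qα/β}` with `C`
depending only on `p, q, α, β, C₀`. -/
theorem weak_type_estimate (p q α β C₀ : ℝ)
    (hp : 1 ≤ p) (hq : 1 ≤ q) (hα : 0 < α) (hβ : 0 < β) (hC₀ : 0 < C₀) :
    ∃ C : ℝ, 0 < C ∧
      ∀ (X : Type) [MetricSpace X] [MeasurableSpace X] [BorelSpace X]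
        (μ : Measure X) [SigmaFinite μ] (K : ℝ → X → X → ℝ),
        IsHeatKernel μ K → Ultracontractive μ K C₀ β →
        ∀ f : X → ℝ, MemBesov μ K p α f → MemLp f (ENNReal.ofReal q) μ →
        ∀ s : ℝ, 0 < s →
          ENNReal.ofReal (s ^ (1 + q * α / β)) * μ {x | s < |f x|} ^ (1 / p) ≤
            ENNReal.ofReal C * besovSeminorm μ K p α f *
              eLpNorm f (ENNReal.ofReal q) μ ^ (q * α / β) :=
  weak_type_estimate_general p q α β C₀ hp hq hβ hC₀

end BesovDirichlet
end
end

section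
/- Assume the ultracontractive bound and let 0 < α < β. There exists a constant C_iso > 0, depending only on α, β and C₀, such that for every measurable set E ⊆ X with μ(E) < ∞ and 1_E ∈ B^{1,α}(X), one has the isoperimetric-type inequality μ(E)^{(β−α)/β} ≤ C_iso · ‖1_E‖_{1,α}. -/
/-! By conservativity, `μ E = ∫_E ∫ p_t` splits into the heat mass that stays in `E` and the mass
that leaves it. Ultracontractivity bounds the first by `C₀ t^{-β} μ(E)²`, and since
`|1_E(x) - 1_E(y)| = 1` for `x ∈ E`, `y ∉ E`, the second is at most the Besov energy of `1_E`,
hence at most `t^α ‖1_E‖_{1,α}`. Choosing `t` so that `C₀ t^{-β} μ(E) = 1/2` gives the claim. -/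

open MeasureTheory ENNReal Metric Filter

noncomputable section

namespace BesovDirichlet

variable {X : Type*} [MeasurableSpace X]

section HeatKernel

variable {μ : Measure X} {K : ℝ → X → X → ℝ} {t : ℝ}

lemma IsHeatKernel.lintegral_ofReal_eq_one (hK : IsHeatKernel μ K) (ht : 0 < t) :
    ∀ᵐ x ∂μ, ∫⁻ y, ENNReal.ofReal (K t x y) ∂μ = 1 := by
  filter_upwards [hK.conservative t ht] with x hx
  have hint : Integrable (K t x) μ := by
    by_contra h
    rw [integral_undef h] at hx
    exact zero_ne_one hx
  rw [← ofReal_integral_eq_lintegral_ofReal hint (ae_of_all _ (hK.nonneg t x)), hx,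
    ENNReal.ofReal_one]

lemma Ultracontractive.setLIntegral_prod_le [SFinite μ] {C₀ β : ℝ}
    (hU : Ultracontractive μ K C₀ β) (ht : 0 < t) (A B : Set X) :
    ∫⁻ xy in A ×ˢ B, ENNReal.ofReal (K t xy.1 xy.2) ∂μ.prod μ ≤
      ENNReal.ofReal (C₀ * t ^ (-β)) * (μ A * μ B) := by
  calc ∫⁻ xy in A ×ˢ B, ENNReal.ofReal (K t xy.1 xy.2) ∂μ.prod μ
      ≤ ∫⁻ _ in A ×ˢ B, ENNReal.ofReal (C₀ * t ^ (-β)) ∂μ.prod μ := by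
        refine lintegral_mono_ae (ae_restrict_of_ae ?_)
        filter_upwards [hU t ht] with xy h using ENNReal.ofReal_le_ofReal h
    _ = ENNReal.ofReal (C₀ * t ^ (-β)) * (μ A * μ B) := by
        rw [setLIntegral_const, Measure.prod_prod]

lemma setLIntegral_compl_le_besovEnergy_indicator {E : Set X} (hE : MeasurableSet E) (p : ℝ) :
    ∫⁻ x in E, ∫⁻ y in Eᶜ, ENNReal.ofReal (K t x y) ∂μ ∂μ ≤
      besovEnergy μ K p t (E.indicator fun _ => 1) := by
  set f : X → ℝ := E.indicator fun _ => 1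
  calc ∫⁻ x in E, ∫⁻ y in Eᶜ, ENNReal.ofReal (K t x y) ∂μ ∂μ
      = ∫⁻ x in E, ∫⁻ y in Eᶜ, ENNReal.ofReal (|f x - f y| ^ p) * ENNReal.ofReal (K t x y) ∂μ ∂μ :=
        setLIntegral_congr_fun hE fun x hx => setLIntegral_congr_fun hE.compl fun y hy => by
          simp [f, hx, Set.indicator_of_notMem hy]
    _ ≤ ∫⁻ x in E, ∫⁻ y, ENNReal.ofReal (|f x - f y| ^ p) * ENNReal.ofReal (K t x y) ∂μ ∂μ :=
        lintegral_mono fun _ => setLIntegral_le_lintegral _ _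
    _ ≤ besovEnergy μ K p t f := setLIntegral_le_lintegral _ _

lemma IsHeatKernel.measure_le_setLIntegral_prod_add_besovEnergy [SFinite μ]
    (hK : IsHeatKernel μ K) (ht : 0 < t) {E : Set X} (hE : MeasurableSet E) (p : ℝ) :
    μ E ≤ ∫⁻ xy in E ×ˢ E, ENNReal.ofReal (K t xy.1 xy.2) ∂μ.prod μ +
      besovEnergy μ K p t (E.indicator fun _ => 1) := by
  have hκ : Measurable fun xy : X × X => ENNReal.ofReal (K t xy.1 xy.2) :=
    (hK.measurable t).ennreal_ofReal
  calc μ E = ∫⁻ x in E, ∫⁻ y, ENNReal.ofReal (K t x y) ∂μ ∂μ := by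
        rw [setLIntegral_congr_fun_ae hE ((hK.lintegral_ofReal_eq_one ht).mono fun x hx _ => hx),
          setLIntegral_one]
    _ = ∫⁻ x in E, (∫⁻ y in E, ENNReal.ofReal (K t x y) ∂μ) +
          ∫⁻ y in Eᶜ, ENNReal.ofReal (K t x y) ∂μ ∂μ :=
        lintegral_congr fun _ => (lintegral_add_compl _ hE).symm
    _ = ∫⁻ xy in E ×ˢ E, ENNReal.ofReal (K t xy.1 xy.2) ∂μ.prod μ +
          ∫⁻ x in E, ∫⁻ y in Eᶜ, ENNReal.ofReal (K t x y) ∂μ ∂μ := by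
        rw [lintegral_add_left' (hκ.lintegral_prod_right' (ν := μ.restrict E)).aemeasurable,
          ← Measure.prod_restrict, lintegral_prod _ hκ.aemeasurable]
    _ ≤ _ := add_le_add_right (setLIntegral_compl_le_besovEnergy_indicator hE p) _

lemma besovEnergy_rpow_le_mul_besovSeminorm (p α : ℝ) (f : X → ℝ) (ht : 0 < t) :
    besovEnergy μ K p t f ^ (1 / p) ≤ ENNReal.ofReal (t ^ α) * besovSeminorm μ K p α f := by
  have h : ENNReal.ofReal (t ^ (-α)) * besovEnergy μ K p t f ^ (1 / p) ≤
      besovSeminorm μ K p α f :=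
    le_iSup₂ (f := fun (s : ℝ) (_ : 0 < s) =>
      ENNReal.ofReal (s ^ (-α)) * besovEnergy μ K p s f ^ (1 / p)) t ht
  calc besovEnergy μ K p t f ^ (1 / p)
      = ENNReal.ofReal (t ^ α) * (ENNReal.ofReal (t ^ (-α)) * besovEnergy μ K p t f ^ (1 / p)) := by
        rw [← mul_assoc, ← ENNReal.ofReal_mul (Real.rpow_nonneg ht.le _), ← Real.rpow_add ht,
          add_neg_cancel, Real.rpow_zero, ENNReal.ofReal_one, one_mul]
    _ ≤ ENNReal.ofReal (t ^ α) * besovSeminorm μ K p α f := by gcongr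

end HeatKernel

/-- The choice `t = (2 C₀ a)^{1/β}` makes the first term `a / 2`. -/
lemma Real.rpow_sub_div_le_of_forall_le_sq_add {a n C₀ α β : ℝ} (ha : 0 < a) (hC₀ : 0 < C₀)
    (hβ : 0 < β) (h : ∀ t : ℝ, 0 < t → a ≤ C₀ * t ^ (-β) * (a * a) + t ^ α * n) :
    a ^ ((β - α) / β) ≤ 2 * (2 * C₀) ^ (α / β) * n := by
  have hs : 0 < 2 * C₀ * a := by positivity
  have ht := h ((2 * C₀ * a) ^ (1 / β)) (Real.rpow_pos_of_pos hs _)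
  rw [← Real.rpow_mul hs.le, ← Real.rpow_mul hs.le, show 1 / β * -β = -1 by field_simp,
    Real.rpow_neg_one, show 1 / β * α = α / β by ring, Real.mul_rpow (by positivity) ha.le] at ht
  have hhalf : C₀ * (2 * C₀ * a)⁻¹ * (a * a) = a / 2 := by field_simp
  have hsplit : a ^ ((β - α) / β) * a ^ (α / β) = a := by
    rw [← Real.rpow_add ha, show (β - α) / β + α / β = 1 by field_simp; ring, Real.rpow_one]
  rw [← mul_le_mul_iff_of_pos_right (Real.rpow_pos_of_pos ha (α / β)), hsplit]
  linarith

lemma ENNReal.rpow_sub_div_le_of_forall_le_sq_add {m N : ℝ≥0∞} {C₀ α β : ℝ} (hm : m ≠ ∞)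
    (hC₀ : 0 < C₀) (hαβ : α < β) (hβ : 0 < β)
    (h : ∀ t : ℝ, 0 < t →
      m ≤ ENNReal.ofReal (C₀ * t ^ (-β)) * (m * m) + ENNReal.ofReal (t ^ α) * N) :
    m ^ ((β - α) / β) ≤ ENNReal.ofReal (2 * (2 * C₀) ^ (α / β)) * N := by
  rcases eq_or_ne m 0 with rfl | hm0
  · rw [ENNReal.zero_rpow_of_pos (div_pos (sub_pos.2 hαβ) hβ)]
    exact zero_le
  rcases eq_or_ne N ∞ with rfl | hN
  · rw [ENNReal.mul_top (ENNReal.ofReal_pos.2 (by positivity)).ne']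
    exact le_top
  have ha : 0 < m.toReal := ENNReal.toReal_pos hm0 hm
  rw [← ENNReal.ofReal_toReal hm, ← ENNReal.ofReal_toReal hN] at h ⊢
  rw [ENNReal.ofReal_rpow_of_pos ha, ← ENNReal.ofReal_mul (by positivity)]
  refine ENNReal.ofReal_le_ofReal
    (Real.rpow_sub_div_le_of_forall_le_sq_add ha hC₀ hβ fun t ht => ?_)
  have := h t ht
  rwa [← ENNReal.ofReal_mul ha.le, ← ENNReal.ofReal_mul (by positivity),
    ← ENNReal.ofReal_mul (by positivity), ← ENNReal.ofReal_add (by positivity) (by positivity),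
    ENNReal.ofReal_le_ofReal_iff (by positivity)] at this

/-- **Isoperimetric-type inequality.** Under the ultracontractive bound, for `0 < α < β`
there is `C_iso > 0` (depending only on `α, β, C₀`) such that for every measurable set
`E` of finite measure with `1_E ∈ B^{1,α}(X)`, `μ(E)^{(β−α)/β} ≤ C_iso ‖1_E‖_{1,α}`. -/
theorem isoperimetric_inequality (α β C₀ : ℝ)
    (hα : 0 < α) (hαβ : α < β) (hC₀ : 0 < C₀) :
    ∃ C : ℝ, 0 < C ∧
      ∀ (X : Type) [MetricSpace X] [MeasurableSpace X] [BorelSpace X]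
        (μ : Measure X) [SigmaFinite μ] (K : ℝ → X → X → ℝ),
        IsHeatKernel μ K → Ultracontractive μ K C₀ β →
        ∀ E : Set X, MeasurableSet E → μ E ≠ ∞ →
          MemBesov μ K 1 α (E.indicator fun _ => (1 : ℝ)) →
          μ E ^ ((β - α) / β) ≤
            ENNReal.ofReal C * besovSeminorm μ K 1 α (E.indicator fun _ => (1 : ℝ)) := by
  have hβ : 0 < β := hα.trans hαβ
  refine ⟨2 * (2 * C₀) ^ (α / β), by positivity, ?_⟩
  intro X _ _ _ μ _ K hK hU E hE hEfin _
  refine ENNReal.rpow_sub_div_le_of_forall_le_sq_add hEfin hC₀ hαβ hβ fun t ht => ?_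
  calc μ E ≤ ∫⁻ xy in E ×ˢ E, ENNReal.ofReal (K t xy.1 xy.2) ∂μ.prod μ +
        besovEnergy μ K 1 t (E.indicator fun _ => 1) :=
      hK.measure_le_setLIntegral_prod_add_besovEnergy ht hE 1
    _ ≤ ENNReal.ofReal (C₀ * t ^ (-β)) * (μ E * μ E) +
        ENNReal.ofReal (t ^ α) * besovSeminorm μ K 1 α (E.indicator fun _ => 1) := by
      gcongr
      · exact hU.setLIntegral_prod_le ht E E
      · simpa using besovEnergy_rpow_le_mul_besovSeminorm (μ := μ) (K := K) 1 α _ ht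

end BesovDirichlet
end
end

section
/- Assume μ(X) = 1 and assume hypercontractivity with constant ρ₀ > 0: for all 1 < p < q < ∞ and t > 0 with e^{ρ₀ t} ≥ √((q−1)/(p−1)), one has ‖P_t f‖_{L^q(X,μ)} ≤ ‖f‖_{L^p(X,μ)} for every f ∈ L^p(X,μ). Then there exists a numerical constant C̃ > 0 (independent of the space, the kernel and ρ₀) such that every measurable set A ⊆ X with 0 < μ(A) ≤ 1/2 and 1_A ∈ B^{1,1/2}(X) satisfies the Gaussian isoperimetric inequality ‖1_A‖_{1,1/2} ≥ C̃ · √ρ₀ · μ(A) · ( ln(1/μ(A)) )^{1/2}. -/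
/-!
The energy of `1_A` at time `t` is `2 ∫_A ∫_{Aᶜ} p_t`; by conservativeness this is
`2 (μ(A) - ∫_A ∫_A p_t)`, and by the semigroup property and symmetry
`∫_A ∫_A p_t ≤ ‖P_{t/2} 1_A‖₂²`.
Hypercontractivity from `L^q`, `q = 1 + e^{-ρ₀ t}`, to `L²` bounds this by `μ(A)^{2/q}`.
At the time `t = 1 / (ρ₀ log (1/μ(A)))` one has `μ(A)^{2/q} ≤ (5/6) μ(A)` and
`t^{-1/2} = √(ρ₀ log (1/μ(A)))`, which is the Gaussian profile.
-/

open MeasureTheory ENNReal Metric Filter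

noncomputable section

namespace BesovDirichlet

variable {X : Type*} [MeasurableSpace X]

variable {μ : Measure X} {K : ℝ → X → X → ℝ} {A : Set X}

namespace IsHeatKernel

lemma measurable_ofReal (hK : IsHeatKernel μ K) (t : ℝ) :
    Measurable fun xy : X × X => ENNReal.ofReal (K t xy.1 xy.2) :=
  (hK.measurable t).ennreal_ofReal

lemma integrable {t : ℝ} (hK : IsHeatKernel μ K) (ht : 0 < t) :
    ∀ᵐ x ∂μ, Integrable (K t x) μ := by
  filter_upwards [hK.conservative t ht] with x hx
  by_contra h
  simp [integral_undef h] at hx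

lemma lintegral_ofReal_eq_one_s9 {t : ℝ} (hK : IsHeatKernel μ K) (ht : 0 < t) :
    ∀ᵐ x ∂μ, ∫⁻ y, ENNReal.ofReal (K t x y) ∂μ = 1 := by
  filter_upwards [hK.conservative t ht, hK.integrable ht] with x hx hint
  rw [← ofReal_integral_eq_lintegral_ofReal hint (ae_of_all _ (hK.nonneg t x)), hx,
    ENNReal.ofReal_one]

lemma ofReal_le_lintegral_mul {s t : ℝ} (hK : IsHeatKernel μ K) (hs : 0 < s) (ht : 0 < t) :
    ∀ᵐ xy ∂μ.prod μ, ENNReal.ofReal (K (t + s) xy.1 xy.2) ≤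
      ∫⁻ z, ENNReal.ofReal (K t xy.1 z) * ENNReal.ofReal (K s z xy.2) ∂μ := by
  filter_upwards [hK.semigroup s t hs ht] with xy hxy
  rw [← hxy, ← Real.enorm_eq_ofReal (integral_nonneg fun z =>
    mul_nonneg (hK.nonneg t _ z) (hK.nonneg s z _))]
  refine (enorm_integral_le_lintegral_enorm _).trans_eq (lintegral_congr fun z => ?_)
  rw [enorm_mul, Real.enorm_eq_ofReal (hK.nonneg t _ z), Real.enorm_eq_ofReal (hK.nonneg s z _)]

lemma setLIntegral_add_setLIntegral_compl [SFinite μ] {t : ℝ} (hK : IsHeatKernel μ K)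
    (hA : MeasurableSet A) (ht : 0 < t) :
    ∫⁻ x in A, ∫⁻ y in A, ENNReal.ofReal (K t x y) ∂μ ∂μ +
      ∫⁻ x in A, ∫⁻ y in Aᶜ, ENNReal.ofReal (K t x y) ∂μ ∂μ = μ A := by
  rw [← lintegral_add_left ((hK.measurable_ofReal t).lintegral_prod_right), ← setLIntegral_one]
  refine lintegral_congr_ae (ae_restrict_of_ae ?_)
  filter_upwards [hK.lintegral_ofReal_eq_one_s9 ht] with x hx
  rw [lintegral_add_compl _ hA, hx]

end IsHeatKernel

lemma besovEnergy_one_indicator [SFinite μ] {t : ℝ} (hK : IsHeatKernel μ K)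
    (hA : MeasurableSet A) :
    besovEnergy μ K 1 t (A.indicator fun _ => (1 : ℝ)) =
      2 * ∫⁻ x in A, ∫⁻ y in Aᶜ, ENNReal.ofReal (K t x y) ∂μ ∂μ := by
  set f : X → ℝ := A.indicator fun _ => 1
  have inner_of_mem : ∀ x ∈ A,
      ∫⁻ y, ENNReal.ofReal (|f x - f y| ^ (1 : ℝ)) * ENNReal.ofReal (K t x y) ∂μ =
        ∫⁻ y in Aᶜ, ENNReal.ofReal (K t x y) ∂μ := by
    intro x hx
    rw [← lintegral_indicator hA.compl]
    refine lintegral_congr fun y => ?_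
    by_cases hy : y ∈ A <;> simp [f, hx, hy]
  have inner_of_notMem : ∀ x ∈ Aᶜ,
      ∫⁻ y, ENNReal.ofReal (|f x - f y| ^ (1 : ℝ)) * ENNReal.ofReal (K t x y) ∂μ =
        ∫⁻ y in A, ENNReal.ofReal (K t x y) ∂μ := by
    intro x hx
    rw [← lintegral_indicator hA]
    refine lintegral_congr fun y => ?_
    by_cases hy : y ∈ A <;> simp_all [f]
  have hsymm : ∫⁻ x in Aᶜ, ∫⁻ y in A, ENNReal.ofReal (K t x y) ∂μ ∂μ =
      ∫⁻ x in A, ∫⁻ y in Aᶜ, ENNReal.ofReal (K t x y) ∂μ ∂μ := by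
    rw [lintegral_lintegral_swap (hK.measurable_ofReal t).aemeasurable]
    simp_rw [hK.symm t]
  rw [besovEnergy, ← lintegral_add_compl _ hA, setLIntegral_congr_fun hA inner_of_mem,
    setLIntegral_congr_fun hA.compl inner_of_notMem, hsymm, two_mul]

lemma eLpNorm_two_sq {f : X → ℝ} : eLpNorm f 2 μ ^ 2 = ∫⁻ x, ‖f x‖ₑ ^ 2 ∂μ := by
  simpa using eLpNorm_nnreal_pow_eq_lintegral (f := f) (μ := μ) (p := 2) two_ne_zero

lemma enorm_heatOp_indicator {t : ℝ} (hK : IsHeatKernel μ K) (hA : MeasurableSet A)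
    (ht : 0 < t) :
    ∀ᵐ x ∂μ, ‖heatOp μ K t (A.indicator fun _ => 1) x‖ₑ =
      ∫⁻ y in A, ENNReal.ofReal (K t x y) ∂μ := by
  filter_upwards [hK.integrable ht] with x hx
  have hP : heatOp μ K t (A.indicator fun _ => 1) x = ∫ y in A, K t x y ∂μ := by
    rw [heatOp, ← integral_indicator hA]
    congr with y
    by_cases hy : y ∈ A <;> simp [hy]
  rw [hP, Real.enorm_eq_ofReal (setIntegral_nonneg hA fun y _ => hK.nonneg t x y),
    ofReal_integral_eq_lintegral_ofReal hx.integrableOn (ae_of_all _ (hK.nonneg t x))]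

lemma setLIntegral_setLIntegral_le_eLpNorm_heatOp_sq [SFinite μ] {t : ℝ}
    (hK : IsHeatKernel μ K) (hA : MeasurableSet A) (ht : 0 < t) :
    ∫⁻ x in A, ∫⁻ y in A, ENNReal.ofReal (K (t + t) x y) ∂μ ∂μ ≤
      eLpNorm (heatOp μ K t (A.indicator fun _ => 1)) 2 μ ^ 2 := by
  set g : X → ℝ≥0∞ := fun z => ∫⁻ y in A, ENNReal.ofReal (K t z y) ∂μ
  have hK_ofReal : ∀ (s : ℝ) (z : X), Measurable fun y => ENNReal.ofReal (K s z y) :=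
    fun s z => (hK.measurable_ofReal s).comp measurable_prodMk_left
  have chapman_kolmogorov : ∀ᵐ xy ∂(μ.restrict A).prod (μ.restrict A),
      ENNReal.ofReal (K (t + t) xy.1 xy.2) ≤
        ∫⁻ z, ENNReal.ofReal (K t z xy.1) * ENNReal.ofReal (K t z xy.2) ∂μ := by
    rw [Measure.prod_restrict]
    filter_upwards [ae_restrict_of_ae (hK.ofReal_le_lintegral_mul ht ht)] with xy hxy
    simpa only [hK.symm t xy.1] using hxy
  calc ∫⁻ x in A, ∫⁻ y in A, ENNReal.ofReal (K (t + t) x y) ∂μ ∂μ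
      = ∫⁻ xy, ENNReal.ofReal (K (t + t) xy.1 xy.2) ∂(μ.restrict A).prod (μ.restrict A) :=
        (lintegral_prod _ (hK.measurable_ofReal _).aemeasurable).symm
    _ ≤ ∫⁻ xy, ∫⁻ z, ENNReal.ofReal (K t z xy.1) * ENNReal.ofReal (K t z xy.2) ∂μ
          ∂(μ.restrict A).prod (μ.restrict A) := lintegral_mono_ae chapman_kolmogorov
    _ = ∫⁻ z, ∫⁻ xy, ENNReal.ofReal (K t z xy.1) * ENNReal.ofReal (K t z xy.2)
          ∂(μ.restrict A).prod (μ.restrict A) ∂μ := by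
        refine lintegral_lintegral_swap (Measurable.aemeasurable ?_)
        exact ((hK.measurable_ofReal t).comp (measurable_snd.prodMk measurable_fst.fst)).mul
          ((hK.measurable_ofReal t).comp (measurable_snd.prodMk measurable_fst.snd))
    _ = ∫⁻ z, g z ^ 2 ∂μ := lintegral_congr fun z => by
        rw [sq, lintegral_prod_mul (hK_ofReal t z).aemeasurable (hK_ofReal t z).aemeasurable]
    _ = eLpNorm (heatOp μ K t (A.indicator fun _ => 1)) 2 μ ^ 2 := by
        rw [eLpNorm_two_sq]
        refine lintegral_congr_ae ?_
        filter_upwards [enorm_heatOp_indicator hK hA ht] with z hz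
        rw [hz]

lemma two_mul_sub_eLpNorm_heatOp_sq_le_besovEnergy [SFinite μ] {t : ℝ} (hK : IsHeatKernel μ K)
    (hA : MeasurableSet A) (ht : 0 < t) :
    2 * (μ A - eLpNorm (heatOp μ K t (A.indicator fun _ => 1)) 2 μ ^ 2) ≤
      besovEnergy μ K 1 (t + t) (A.indicator fun _ => 1) := by
  rw [besovEnergy_one_indicator hK hA]
  gcongr
  rw [tsub_le_iff_right, ← hK.setLIntegral_add_setLIntegral_compl hA (add_pos ht ht), add_comm]
  gcongr
  exact setLIntegral_setLIntegral_le_eLpNorm_heatOp_sq hK hA ht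

lemma ofReal_rpow_mul_le_besovSeminorm_one_indicator [SFinite μ] {α t : ℝ}
    (hK : IsHeatKernel μ K) (hA : MeasurableSet A) (ht : 0 < t) :
    ENNReal.ofReal ((t + t) ^ (-α)) *
        (2 * (μ A - eLpNorm (heatOp μ K t (A.indicator fun _ => 1)) 2 μ ^ 2)) ≤
      besovSeminorm μ K 1 α (A.indicator fun _ => 1) := by
  refine le_iSup₂_of_le (t + t) (add_pos ht ht) ?_
  rw [div_one, ENNReal.rpow_one]
  gcongr
  exact two_mul_sub_eLpNorm_heatOp_sq_le_besovEnergy hK hA ht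

def IsHypercontractive (μ : Measure X) (K : ℝ → X → X → ℝ) (ρ₀ : ℝ) : Prop :=
  ∀ p q t : ℝ, 1 < p → p < q → 0 < t →
    Real.sqrt ((q - 1) / (p - 1)) ≤ Real.exp (ρ₀ * t) →
    ∀ f : X → ℝ, MemLp f (ENNReal.ofReal p) μ →
      eLpNorm (heatOp μ K t f) (ENNReal.ofReal q) μ ≤ eLpNorm f (ENNReal.ofReal p) μ

lemma IsHypercontractive.eLpNorm_heatOp_indicator_sq_le [IsFiniteMeasure μ] {ρ₀ t : ℝ}
    (hHC : IsHypercontractive μ K ρ₀) (hρ₀ : 0 < ρ₀) (hA : MeasurableSet A) (ht : 0 < t) :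
    eLpNorm (heatOp μ K t (A.indicator fun _ => 1)) 2 μ ^ 2 ≤
      μ A ^ (2 / (1 + Real.exp (-(2 * ρ₀ * t)))) := by
  set q := 1 + Real.exp (-(2 * ρ₀ * t))
  have hexp_lt : Real.exp (-(2 * ρ₀ * t)) < 1 := Real.exp_lt_one_iff.2 (by nlinarith)
  have hq₁ : 1 < q := by linarith [Real.exp_pos (-(2 * ρ₀ * t))]
  have hcond : Real.sqrt ((2 - 1) / (q - 1)) ≤ Real.exp (ρ₀ * t) := by
    have : (2 - 1) / (q - 1) = Real.exp (ρ₀ * t) ^ 2 := by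
      rw [← Real.exp_nat_mul, add_sub_cancel_left, Real.exp_neg]
      field_simp
      ring_nf
    rw [this, Real.sqrt_sq (Real.exp_pos _).le]
  have hbound := hHC q 2 t hq₁ (by linarith) ht hcond _
    (memLp_indicator_const _ hA 1 (Or.inr (measure_ne_top μ A)))
  rw [ENNReal.ofReal_ofNat, eLpNorm_indicator_const hA (by simp; linarith) ENNReal.ofReal_ne_top,
    enorm_one, one_mul, ENNReal.toReal_ofReal (by linarith)] at hbound
  calc eLpNorm (heatOp μ K t (A.indicator fun _ => 1)) 2 μ ^ 2
      ≤ (μ A ^ (1 / q)) ^ 2 := by gcongr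
    _ = μ A ^ (2 / q) := by rw [← ENNReal.rpow_mul_natCast]; ring_nf

lemma add_one_fifth_le_two_mul_div {L : ℝ} (hL : 1 / 3 ≤ L) :
    L + 1 / 5 ≤ 2 * L / (1 + Real.exp (-L⁻¹)) := by
  have hL₀ : 0 < L := by linarith
  set E := Real.exp (-L⁻¹)
  have hE : E * (L + 1) ≤ L := by
    have hexp : 1 + L⁻¹ ≤ Real.exp L⁻¹ := by linarith [Real.add_one_le_exp L⁻¹]
    have hinv : E * Real.exp L⁻¹ = 1 := by rw [← Real.exp_add]; simp
    calc E * (L + 1) = E * L * (1 + L⁻¹) := by field_simp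
      _ ≤ E * L * Real.exp L⁻¹ := by gcongr
      _ = L := by rw [mul_right_comm, hinv, one_mul]
  rw [le_div_iff₀ (by positivity)]
  nlinarith [Real.exp_pos (-L⁻¹)]

lemma rpow_two_div_one_add_exp_le {r : ℝ} (hr₀ : 0 < r) (hr : r ≤ 1 / 2) :
    r ^ (2 / (1 + Real.exp (-(Real.log (1 / r))⁻¹))) ≤ 5 / 6 * r := by
  set L := Real.log (1 / r)
  have hL : 1 / 3 ≤ L := by
    have : Real.log 2 ≤ L := Real.log_le_log two_pos (by rw [le_div_iff₀ hr₀]; linarith)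
    linarith [Real.log_two_gt_d9]
  have hlog : Real.log r = -L := by simp [L]
  have hexp : Real.exp (-(1 / 5)) ≤ 5 / 6 := by
    rw [Real.exp_neg, inv_le_comm₀ (Real.exp_pos _) (by norm_num)]
    linarith [Real.add_one_le_exp (1 / 5 : ℝ)]
  calc r ^ (2 / (1 + Real.exp (-L⁻¹)))
      = Real.exp (-(2 * L / (1 + Real.exp (-L⁻¹)))) := by
        rw [Real.rpow_def_of_pos hr₀, hlog]; ring_nf
    _ ≤ Real.exp (-(L + 1 / 5)) :=
        Real.exp_le_exp.2 (by linarith [add_one_fifth_le_two_mul_div hL])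
    _ = r * Real.exp (-(1 / 5)) := by rw [neg_add, Real.exp_add, ← hlog, Real.exp_log hr₀]
    _ ≤ 5 / 6 * r := by nlinarith

/-- **Gaussian isoperimetric inequality from hypercontractivity.** There is a numerical
constant `C̃ > 0`, independent of the space, the kernel and `ρ₀`, such that if `μ(X) = 1`
and the semigroup is hypercontractive with constant `ρ₀ > 0`, then every measurable set
`A` with `0 < μ(A) ≤ 1/2` and `1_A ∈ B^{1,1/2}(X)` satisfies
`‖1_A‖_{1,1/2} ≥ C̃ √ρ₀ μ(A) (ln(1/μ(A)))^{1/2}`. -/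
theorem gaussian_isoperimetry :
    ∃ C : ℝ, 0 < C ∧
      ∀ (X : Type) [MetricSpace X] [MeasurableSpace X] [BorelSpace X]
        (μ : Measure X) [IsProbabilityMeasure μ] (K : ℝ → X → X → ℝ),
        IsHeatKernel μ K →
        ∀ ρ₀ : ℝ, 0 < ρ₀ →
        (∀ p q t : ℝ, 1 < p → p < q → 0 < t →
          Real.sqrt ((q - 1) / (p - 1)) ≤ Real.exp (ρ₀ * t) →
          ∀ f : X → ℝ, MemLp f (ENNReal.ofReal p) μ →
            eLpNorm (heatOp μ K t f) (ENNReal.ofReal q) μ ≤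
              eLpNorm f (ENNReal.ofReal p) μ) →
        ∀ A : Set X, MeasurableSet A → 0 < μ A → μ A ≤ 1 / 2 →
          MemBesov μ K 1 (1 / 2) (A.indicator fun _ => (1 : ℝ)) →
          ENNReal.ofReal (C * Real.sqrt ρ₀ * (μ A).toReal *
              Real.sqrt (Real.log (1 / (μ A).toReal))) ≤
            besovSeminorm μ K 1 (1 / 2) (A.indicator fun _ => (1 : ℝ)) := by
  refine ⟨1 / 3, by norm_num, ?_⟩
  intro X _ _ _ μ _ K hK ρ₀ hρ₀ hHC A hA hA₀ hA_half _
  set r := (μ A).toReal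
  set L := Real.log (1 / r)
  have hμA : μ A = ENNReal.ofReal r := (ENNReal.ofReal_toReal (measure_ne_top μ A)).symm
  have hr₀ : 0 < r := ENNReal.toReal_pos hA₀.ne' (measure_ne_top μ A)
  have hr : r ≤ 1 / 2 := by simpa [r] using ENNReal.toReal_mono (by norm_num) hA_half
  have hL : 0 < L := Real.log_pos (by rw [lt_div_iff₀ hr₀]; linarith)
  set t := (ρ₀ * L)⁻¹
  have ht : 0 < t := by positivity
  have hρ₀t : 2 * ρ₀ * (t / 2) = L⁻¹ := by simp only [t]; field_simp
  have ht_rpow : t ^ (-(1 / 2 : ℝ)) = √ρ₀ * √L := by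
    rw [Real.rpow_neg ht.le, Real.inv_rpow (by positivity), inv_inv, ← Real.sqrt_eq_rpow,
      Real.sqrt_mul hρ₀.le]
  have hheat := IsHypercontractive.eLpNorm_heatOp_indicator_sq_le hHC hρ₀ hA (half_pos ht)
  rw [hρ₀t, hμA, ENNReal.ofReal_rpow_of_pos hr₀] at hheat
  have hbesov := ofReal_rpow_mul_le_besovSeminorm_one_indicator (α := 1 / 2) hK hA (half_pos ht)
  rw [add_halves, ht_rpow] at hbesov
  have hgain := rpow_two_div_one_add_exp_le hr₀ hr
  calc ENNReal.ofReal (1 / 3 * √ρ₀ * r * √L)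
      ≤ ENNReal.ofReal (√ρ₀ * √L * (2 * (r - r ^ (2 / (1 + Real.exp (-L⁻¹)))))) := by
        refine ENNReal.ofReal_le_ofReal ?_
        nlinarith [mul_nonneg (Real.sqrt_nonneg ρ₀) (Real.sqrt_nonneg L)]
    _ = ENNReal.ofReal (√ρ₀ * √L) *
          (2 * (μ A - ENNReal.ofReal (r ^ (2 / (1 + Real.exp (-L⁻¹)))))) := by
        rw [ENNReal.ofReal_mul (by positivity), ENNReal.ofReal_mul zero_le_two,
          ENNReal.ofReal_sub _ (by positivity), ENNReal.ofReal_ofNat, hμA]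
    _ ≤ besovSeminorm μ K 1 (1 / 2) (A.indicator fun _ => 1) := hbesov.trans' (by gcongr)

end BesovDirichlet
end
end
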